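/- Let ε, ζ be Hermitian positive-definite 3×3 complex matrices with smallest eigenvalue ≥ c₀ > 0, and let k ∈ ℂ with |k| ≥ 1 and Im k ≥ 0, k ≠ 0. Then there exists a unimodular α_k ∈ ℂ such that for all w ∈ ℂ³: Re(α_k k² ⟨εw, w⟩) ≥ c·|k|²·‖w‖² and Re(α_k i k ⟨ζw, w⟩) ≥ c·|k|·‖w‖², where c > 0 depends only on c₀ (and not on k). -/

import Mathlib

/-!
Write `k = |k| e^{iθ}` with `θ = arg k ∈ [0, π]` and put `φ = θ/2 - π/4 ∈ [-π/4, π/4]`.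
The rotation `α = e^{i(φ - 2θ)}` turns `k²` into `|k|² e^{iφ}` and `ik` into `|k| e^{-iφ}`,
so both real parts are at least `cos (π/4) = √2/2` times `|k|²`, resp. `|k|`. The Hermitian
forms are real, so multiplying them by these numbers keeps the coercivity with `c = c₀ √2/2`.
-/

open Complex Matrix

lemma Matrix.IsHermitian.im_sum_mulVec_mul_star {n : Type*} [Fintype n] {M : Matrix n n ℂ}
    (hM : M.IsHermitian) (w : n → ℂ) : (∑ i, M.mulVec w i * star (w i)).im = 0 := by
  have hdot : ∑ i, M.mulVec w i * star (w i) = star w ⬝ᵥ M *ᵥ w := dotProduct_comm _ _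
  exact hdot ▸ hM.im_star_dotProduct_mulVec_self w

namespace Complex

lemma le_re_mul_of_im_eq_zero {z S : ℂ} {c₀ ρ N : ℝ} (hc₀ : 0 ≤ c₀) (hN : 0 ≤ N)
    (hρ : 0 ≤ ρ) (hz : ρ ≤ z.re) (hS : S.im = 0) (hSN : c₀ * N ≤ S.re) :
    c₀ * ρ * N ≤ (z * S).re := by
  calc c₀ * ρ * N = ρ * (c₀ * N) := by ring
    _ ≤ z.re * S.re := mul_le_mul hz hSN (mul_nonneg hc₀ hN) (hρ.trans hz)
    _ = (z * S).re := by simp [mul_re, hS]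

noncomputable def rotationAngle (k : ℂ) : ℝ := k.arg / 2 - Real.pi / 4

noncomputable def rotationFactor (k : ℂ) : ℂ := exp ((rotationAngle k - 2 * k.arg : ℝ) * I)

lemma norm_rotationFactor (k : ℂ) : ‖rotationFactor k‖ = 1 :=
  norm_exp_ofReal_mul_I _

lemma rotationFactor_mul_sq (k : ℂ) :
    rotationFactor k * k ^ 2 = (‖k‖ ^ 2 : ℝ) * exp (rotationAngle k * I) := by
  have hk := norm_mul_exp_arg_mul_I k
  rw [rotationFactor]
  set φ := rotationAngle k
  set θ := k.arg
  set r := ‖k‖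
  rw [← hk, mul_pow, ← exp_nat_mul, mul_left_comm, ← exp_add]
  push_cast
  ring_nf

lemma rotationFactor_mul_I_mul (k : ℂ) :
    rotationFactor k * I * k = (‖k‖ : ℝ) * exp ((-rotationAngle k : ℝ) * I) := by
  have hk := norm_mul_exp_arg_mul_I k
  rw [rotationFactor]
  set φ := rotationAngle k
  set θ := k.arg
  set r := ‖k‖
  have hφ : (2 * φ : ℂ) = θ - Real.pi / 2 := by simp only [φ, rotationAngle]; push_cast; ring
  have harg : ((-φ : ℝ) : ℂ) * I = ((φ - 2 * θ : ℝ) : ℂ) * I + θ * I + Real.pi / 2 * I := by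
    push_cast
    linear_combination -I * hφ
  rw [← hk, harg, exp_add, exp_add, exp_pi_div_two_mul_I]
  ring

lemma cos_pi_div_four_le_cos_rotationAngle {k : ℂ} (hk : 0 ≤ k.im) :
    Real.cos (Real.pi / 4) ≤ Real.cos (rotationAngle k) := by
  have h₀ : 0 ≤ k.arg := arg_nonneg_iff.mpr hk
  have hπ : k.arg ≤ Real.pi := arg_le_pi k
  rw [← Real.cos_abs (rotationAngle k)]
  refine Real.cos_le_cos_of_nonneg_of_le_pi (abs_nonneg _) (by linarith [Real.pi_pos]) ?_
  rw [rotationAngle, abs_le]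
  constructor <;> linarith

lemma sqrt_two_div_two_mul_sq_le_re_rotationFactor_mul_sq {k : ℂ} (hk : 0 ≤ k.im) :
    √2 / 2 * ‖k‖ ^ 2 ≤ (rotationFactor k * k ^ 2).re := by
  rw [rotationFactor_mul_sq, re_ofReal_mul, exp_ofReal_mul_I_re, ← Real.cos_pi_div_four,
    mul_comm]
  exact mul_le_mul_of_nonneg_left (cos_pi_div_four_le_cos_rotationAngle hk) (by positivity)

lemma sqrt_two_div_two_mul_le_re_rotationFactor_mul_I_mul {k : ℂ} (hk : 0 ≤ k.im) :
    √2 / 2 * ‖k‖ ≤ (rotationFactor k * I * k).re := by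
  rw [rotationFactor_mul_I_mul, re_ofReal_mul, exp_ofReal_mul_I_re, Real.cos_neg,
    ← Real.cos_pi_div_four, mul_comm]
  exact mul_le_mul_of_nonneg_left (cos_pi_div_four_le_cos_rotationAngle hk) (norm_nonneg k)

end Complex

open Complex in
/-- Rotated simultaneous coercivity of the `ε` volume term and the `ζ` impedance term
for Hermitian positive-definite coefficients and wavenumbers in the closed upper
half-plane with `|k| ≥ 1`. The constant `c` depends only on `c₀`. -/
theorem stmt_16 (c₀ : ℝ) (hc₀ : 0 < c₀) :
    ∃ c > (0 : ℝ), ∀ (ε ζ : Matrix (Fin 3) (Fin 3) ℂ),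
      ε.IsHermitian → ζ.IsHermitian →
      (∀ w : Fin 3 → ℂ, c₀ * ∑ i, Complex.normSq (w i) ≤
        (∑ i, ε.mulVec w i * star (w i)).re) →
      (∀ w : Fin 3 → ℂ, c₀ * ∑ i, Complex.normSq (w i) ≤
        (∑ i, ζ.mulVec w i * star (w i)).re) →
      ∀ k : ℂ, 1 ≤ ‖k‖ → 0 ≤ k.im → k ≠ 0 →
      ∃ αk : ℂ, ‖αk‖ = 1 ∧
        (∀ w : Fin 3 → ℂ,
          c * ‖k‖ ^ 2 * ∑ i, Complex.normSq (w i) ≤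
            (αk * k ^ 2 * ∑ i, ε.mulVec w i * star (w i)).re) ∧
        (∀ w : Fin 3 → ℂ,
          c * ‖k‖ * ∑ i, Complex.normSq (w i) ≤
            (αk * Complex.I * k * ∑ i, ζ.mulVec w i * star (w i)).re) := by
  refine ⟨c₀ * (√2 / 2), by positivity, fun ε ζ hε hζ hεc hζc k _ hk _ => ?_⟩
  have hN (w : Fin 3 → ℂ) : 0 ≤ ∑ i, normSq (w i) :=
    Finset.sum_nonneg fun i _ => normSq_nonneg (w i)
  refine ⟨rotationFactor k, norm_rotationFactor k, fun w => ?_, fun w => ?_⟩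
  · rw [mul_assoc c₀]
    exact le_re_mul_of_im_eq_zero hc₀.le (hN w) (by positivity)
      (sqrt_two_div_two_mul_sq_le_re_rotationFactor_mul_sq hk) (hε.im_sum_mulVec_mul_star w)
      (hεc w)
  · rw [mul_assoc c₀]
    exact le_re_mul_of_im_eq_zero hc₀.le (hN w) (by positivity)
      (sqrt_two_div_two_mul_le_re_rotationFactor_mul_I_mul hk) (hζ.im_sum_mulVec_mul_star w)
      (hζc w)
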